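/- (Outer-loop complexity of 4WD-Catalyst with adaptive smoothing, convex case.) Let f : ℝ^p → ℝ be convex with minimizer x*, let (κ_k)_{k ≥ 1} be positive reals with κ_k ≤ κ_max, and let κ_cvx > 0. Let (α_k)_{k ≥ 1} satisfy α_1 = 1, α_k ∈ (0,1] and (1 − α_{k+1})/α_{k+1}² = 1/α_k² for all k ≥ 1. Suppose sequences (x_k)_{k ≥ 0}, (v_k)_{k ≥ 0}, (y_k)_{k ≥ 1}, (x̄_k)_{k ≥ 1}, (x̃_k)_{k ≥ 1} in ℝ^p satisfy v_0 = x_0 and, for every k ≥ 1: (i) there exists w_k ∈ ∂(f_{κ_k}(·; x_{k−1}))(x̄_k) with ‖w_k‖ ≤ κ_k‖x̄_k − x_{k−1}‖, and f(x̄_k) + (κ_k/2)‖x̄_k − x_{k−1}‖² ≤ f(x_{k−1}); (ii) y_k = α_k v_{k−1} + (1 − α_k) x_{k−1}; (iii) there exists ξ_k ∈ ∂(f_{κ_cvx}(·; y_k))(x̃_k) with ‖ξ_k‖ ≤ (κ_cvx/(k+1))·‖x̃_k − y_k‖; (iv) v_k = x_{k−1} + (1/α_k)(x̃_k − x_{k−1});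 (v) f(x_k) ≤ min(f(x̄_k), f(x̃_k)). Then for every integer N ≥ 1: f(x_N) − f(x*) ≤ (4κ_cvx/(N+1)²)·‖x* − x_0‖², and there exist an index j with 1 ≤ j ≤ 2N and w ∈ ∂f(x̄_j) with ‖w‖² ≤ (32·κ_max·κ_cvx/(N(N+1)²))·‖x* − x_0‖². -/

import Mathlib

set_option maxHeartbeats 4000000
set_option linter.deprecated false


/-- `v` is a subgradient (in the sense of convex analysis) of `g` at `x`:
`g y ≥ g x + ⟨v, y − x⟩` for all `y`. -/
def CSubgradAt {p : ℕ} (g : EuclideanSpace ℝ (Fin p) → ℝ)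
    (v x : EuclideanSpace ℝ (Fin p)) : Prop :=
  ∀ y : EuclideanSpace ℝ (Fin p), g x + (inner ℝ v (y - x) : ℝ) ≤ g y

lemma csubgrad_of_quad {p : ℕ} {f : EuclideanSpace ℝ (Fin p) → ℝ}
    (hf : ConvexOn ℝ Set.univ f) {c : ℝ} (hc : 0 ≤ c)
    {y x ξ : EuclideanSpace ℝ (Fin p)}
    (h : CSubgradAt (fun z => f z + c / 2 * ‖z - y‖ ^ 2) ξ x) :
    CSubgradAt f (ξ - c • (x - y)) x := by
  have hstar : ∀ z, f x + (inner ℝ (ξ - c • (x - y)) (z - x) : ℝ) ≤ f z + c/2 * ‖z - x‖^2 := by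
    intro z
    have hz := h z
    simp only at hz
    have hid : ‖z - y‖^2 = ‖x - y‖^2 + 2 * (inner ℝ (x - y) (z - x) : ℝ) + ‖z - x‖^2 := by
      have he : z - y = (x - y) + (z - x) := by abel
      rw [he, norm_add_sq_real]
    have hinner : (inner ℝ (ξ - c • (x-y)) (z - x) : ℝ)
        = (inner ℝ ξ (z-x) : ℝ) - c * (inner ℝ (x-y) (z-x) : ℝ) := by
      rw [inner_sub_left, real_inner_smul_left]
    rw [hid] at hz
    rw [hinner]
    linarith
  intro z
  have key : ∀ t : ℝ, 0 < t → t ≤ 1 →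
      (inner ℝ (ξ - c•(x-y)) (z-x) : ℝ) ≤ f z - f x + c*t/2 * ‖z-x‖^2 := by
    intro t ht ht1
    have h1 := hstar (x + t • (z - x))
    have hconv : f (x + t • (z-x)) ≤ (1-t) * f x + t * f z := by
      have h2 := hf.2 (Set.mem_univ x) (Set.mem_univ z) (by linarith : (0:ℝ) ≤ 1 - t)
        (le_of_lt ht) (by ring)
      simp only [smul_eq_mul] at h2
      have he : x + t • (z - x) = (1-t) • x + t • z := by module
      rw [he]; exact h2
    have e1 : (x + t • (z - x)) - x = t • (z - x) := by abel
    rw [e1, real_inner_smul_right, norm_smul] at h1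
    have e3 : (|t| * ‖z-x‖)^2 = t^2 * ‖z-x‖^2 := by
      rw [mul_pow, sq_abs]
    rw [Real.norm_eq_abs, e3] at h1
    have h4 : f x + t * (inner ℝ (ξ - c•(x-y)) (z-x) : ℝ)
        ≤ (1-t)*f x + t*f z + c/2*(t^2*‖z-x‖^2) := le_trans h1 (by linarith)
    nlinarith [h4]
  apply le_of_forall_pos_le_add
  intro ε hε
  set q : ℝ := c/2 * ‖z - x‖^2 with hq
  have hq0 : 0 ≤ q := by positivity
  have htpos : 0 < ε / (q + 1) := by positivity
  set t : ℝ := min 1 (ε / (q+1)) with htdef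
  have ht : 0 < t := lt_min one_pos htpos
  have ht1 : t ≤ 1 := min_le_left _ _
  have h2 := key t ht ht1
  have ht2 : t ≤ ε / (q+1) := min_le_right _ _
  have h3 : c*t/2 * ‖z-x‖^2 ≤ ε := by
    have he : c*t/2 * ‖z-x‖^2 = t * q := by rw [hq]; ring
    rw [he]
    have h4 : t * (q+1) ≤ ε := by
      rw [le_div_iff₀ (by positivity)] at ht2
      exact ht2
    nlinarith
  linarith

lemma strong_ineq {p : ℕ} {f : EuclideanSpace ℝ (Fin p) → ℝ}
    (hf : ConvexOn ℝ Set.univ f) {c : ℝ} (hc : 0 ≤ c)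
    {y x ξ : EuclideanSpace ℝ (Fin p)}
    (h : CSubgradAt (fun z => f z + c / 2 * ‖z - y‖ ^ 2) ξ x) :
    ∀ z, f x + c/2 * ‖x-y‖^2 + (inner ℝ ξ (z-x) : ℝ) + c/2 * ‖z-x‖^2
      ≤ f z + c/2 * ‖z-y‖^2 := by
  intro z
  have hη := csubgrad_of_quad hf hc h z
  have hid : ‖z - y‖^2 = ‖x - y‖^2 + 2 * (inner ℝ (x - y) (z - x) : ℝ) + ‖z - x‖^2 := by
    have he : z - y = (x - y) + (z - x) := by abel
    rw [he, norm_add_sq_real]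
  have hinner : (inner ℝ (ξ - c • (x-y)) (z - x) : ℝ)
      = (inner ℝ ξ (z-x) : ℝ) - c * (inner ℝ (x-y) (z-x) : ℝ) := by
    rw [inner_sub_left, real_inner_smul_left]
  rw [hinner] at hη
  rw [hid]
  linarith

/-- Outer-loop complexity of 4WD-Catalyst with adaptive smoothing,
convex case. -/
theorem outer_loop_complexity_adaptive_convex (p : ℕ) (hp : 0 < p)
    (f : EuclideanSpace ℝ (Fin p) → ℝ) (hf : ConvexOn ℝ Set.univ f)
    (xstar : EuclideanSpace ℝ (Fin p)) (hxstar : ∀ z, f xstar ≤ f z)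
    (κ : ℕ → ℝ) (κmax κcvx : ℝ)
    (hκpos : ∀ k : ℕ, 1 ≤ k → 0 < κ k)
    (hκmax : ∀ k : ℕ, 1 ≤ k → κ k ≤ κmax)
    (hκcvx : 0 < κcvx)
    (α : ℕ → ℝ) (hα1 : α 1 = 1)
    (hαmem : ∀ k : ℕ, 1 ≤ k → α k ∈ Set.Ioc (0 : ℝ) 1)
    (hαrec : ∀ k : ℕ, 1 ≤ k → (1 - α (k + 1)) / (α (k + 1)) ^ 2 = 1 / (α k) ^ 2)
    (x v y xbar xtil : ℕ → EuclideanSpace ℝ (Fin p))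
    (hv0 : v 0 = x 0)
    (hprox : ∀ k : ℕ, 1 ≤ k → (∃ w : EuclideanSpace ℝ (Fin p),
      CSubgradAt (fun z => f z + κ k / 2 * ‖z - x (k - 1)‖ ^ 2) w (xbar k) ∧
        ‖w‖ ≤ κ k * ‖xbar k - x (k - 1)‖) ∧
      f (xbar k) + κ k / 2 * ‖xbar k - x (k - 1)‖ ^ 2 ≤ f (x (k - 1)))
    (hy : ∀ k : ℕ, 1 ≤ k → y k = α k • v (k - 1) + (1 - α k) • x (k - 1))
    (hxtil : ∀ k : ℕ, 1 ≤ k → ∃ ξ : EuclideanSpace ℝ (Fin p),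
      CSubgradAt (fun z => f z + κcvx / 2 * ‖z - y k‖ ^ 2) ξ (xtil k) ∧
        ‖ξ‖ ≤ κcvx / ((k : ℝ) + 1) * ‖xtil k - y k‖)
    (hvk : ∀ k : ℕ, 1 ≤ k → v k = x (k - 1) + (α k)⁻¹ • (xtil k - x (k - 1)))
    (hbest : ∀ k : ℕ, 1 ≤ k → f (x k) ≤ min (f (xbar k)) (f (xtil k))) :
    ∀ N : ℕ, 1 ≤ N →
      (f (x N) - f xstar ≤ 4 * κcvx / ((N : ℝ) + 1) ^ 2 * ‖xstar - x 0‖ ^ 2) ∧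
      ∃ j : ℕ, 1 ≤ j ∧ j ≤ 2 * N ∧
        ∃ w : EuclideanSpace ℝ (Fin p), CSubgradAt f w (xbar j) ∧
          ‖w‖ ^ 2 ≤ 32 * κmax * κcvx / ((N : ℝ) * ((N : ℝ) + 1) ^ 2) * ‖xstar - x 0‖ ^ 2 := by
  -- basic facts about α
  have hαpos : ∀ k : ℕ, 1 ≤ k → 0 < α k := fun k hk => (hαmem k hk).1
  have hαle : ∀ k : ℕ, 1 ≤ k → α k ≤ 1 := fun k hk => (hαmem k hk).2
  -- α k ≤ 2/(k+1)
  have halphab : ∀ k : ℕ, 1 ≤ k → α k ≤ 2/((k:ℝ)+1) := by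
    intro k hk
    induction k, hk using Nat.le_induction with
    | base => rw [hα1]; norm_num
    | succ k hk ih =>
      have hA := hαmem (k+1) (by omega)
      have hB := hαmem k hk
      have hrec := hαrec k hk
      have hA0 := hA.1
      have hB0 := hB.1
      have hc1 : (1:ℝ) ≤ (k:ℝ) := by exact_mod_cast hk
      have hcross : (1 - α (k+1)) * (α k)^2 = (α (k+1))^2 := by
        field_simp at hrec
        linarith [hrec]
      have h1A : (0:ℝ) ≤ 1 - α (k+1) := by linarith [hA.2]
      have hBsq : (α k)^2 ≤ (2/((k:ℝ)+1))^2 := by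
        apply pow_le_pow_left₀ hB0.le ih
      have hq : (α (k+1))^2 * ((k:ℝ)+1)^2 ≤ 4*(1 - α (k+1)) := by
        have h2 : (1 - α (k+1)) * (α k)^2 ≤ (1 - α (k+1)) * (2/((k:ℝ)+1))^2 :=
          mul_le_mul_of_nonneg_left hBsq h1A
        have h3 : (2/((k:ℝ)+1))^2 * ((k:ℝ)+1)^2 = 4 := by
          field_simp
          norm_num
        nlinarith [h2, hcross, sq_nonneg ((k:ℝ)+1)]
      have hcast : (((k+1:ℕ)):ℝ) + 1 = (k:ℝ) + 2 := by push_cast; ring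
      rw [hcast, le_div_iff₀ (by linarith)]
      by_contra hcon
      push_neg at hcon
      nlinarith [hq, hA.1, hA.2, hcon, sq_nonneg (α (k+1)*((k:ℝ)+2) - 2),
        mul_pos hA.1 (by linarith : (0:ℝ) < (k:ℝ)+2)]
  -- key per-iteration recursion
  have key : ∀ k : ℕ, 1 ≤ k →
      f (xtil k) - f xstar
        + κcvx * (α k)^2/2 * (1 - (1/((k:ℝ)+1))^2) * ‖xstar - v k‖^2
      ≤ (1 - α k) * (f (x (k-1)) - f xstar)
        + κcvx * (α k)^2/2 * ‖xstar - v (k-1)‖^2 := by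
    intro k hk
    obtain ⟨ξ, hξs, hξn⟩ := hxtil k hk
    have hA0 : 0 < α k := hαpos k hk
    have hAle := hαle k hk
    have hAne : α k ≠ 0 := ne_of_gt hA0
    have hs := strong_ineq hf (le_of_lt hκcvx) hξs (α k • xstar + (1 - α k) • x (k-1))
    have hyk := hy k hk
    have hvkk := hvk k hk
    have hxtileq : xtil k = α k • v k + (1 - α k) • x (k-1) := by
      have h1 : α k • v k = α k • x (k-1) + (xtil k - x (k-1)) := by
        rw [hvkk, smul_add, smul_smul, mul_inv_cancel₀ hAne, one_smul]
      rw [h1]; module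
    have hid1 : α k • xstar + (1 - α k) • x (k-1) - y k = α k • (xstar - v (k-1)) := by
      rw [hyk]; module
    have hid2 : xtil k - y k = α k • (v k - v (k-1)) := by
      rw [hxtileq, hyk]; module
    have hid3 : α k • xstar + (1 - α k) • x (k-1) - xtil k = α k • (xstar - v k) := by
      rw [hxtileq]; module
    rw [hid1, hid3, hid2] at hs
    rw [hid2] at hξn
    set a := ‖v k - v (k-1)‖ with hadef
    set b := ‖xstar - v k‖ with hbdef
    set r := ‖xstar - v (k-1)‖ with hrdef
    have hna : ‖α k • (v k - v (k-1))‖ = α k * a := by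
      rw [norm_smul, Real.norm_eq_abs, abs_of_pos hA0]
    have hnb : ‖α k • (xstar - v k)‖ = α k * b := by
      rw [norm_smul, Real.norm_eq_abs, abs_of_pos hA0]
    have hnr : ‖α k • (xstar - v (k-1))‖ = α k * r := by
      rw [norm_smul, Real.norm_eq_abs, abs_of_pos hA0]
    rw [hna, hnb, hnr, real_inner_smul_right] at hs
    rw [hna] at hξn
    -- inner product lower bound
    have hinn : -(‖ξ‖*b) ≤ (inner ℝ ξ (xstar - v k) : ℝ) := by
      have h1 := abs_real_inner_le_norm ξ (xstar - v k)
      have h2 := neg_abs_le (inner ℝ ξ (xstar - v k) : ℝ)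
      rw [← hbdef] at h1
      linarith
    have hb0 : 0 ≤ b := norm_nonneg _
    have ha0 : 0 ≤ a := norm_nonneg _
    have hI : -(α k * (κcvx/((k:ℝ)+1)*(α k*a)*b)) ≤ α k * (inner ℝ ξ (xstar - v k) : ℝ) := by
      have h1 : ‖ξ‖*b ≤ κcvx/((k:ℝ)+1)*(α k*a)*b :=
        mul_le_mul_of_nonneg_right hξn hb0
      have h2 : α k * (-(‖ξ‖*b)) ≤ α k * (inner ℝ ξ (xstar - v k) : ℝ) :=
        mul_le_mul_of_nonneg_left hinn hA0.le
      nlinarith [h1, h2, hA0]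
    -- convexity
    have hcv : f (α k • xstar + (1 - α k) • x (k-1)) ≤ α k * f xstar + (1 - α k) * f (x (k-1)) := by
      have h2 := hf.2 (Set.mem_univ xstar) (Set.mem_univ (x (k-1))) hA0.le
        (by linarith : (0:ℝ) ≤ 1 - α k) (by ring)
      simpa [smul_eq_mul] using h2
    -- scalar gymnastics
    have hc1 : (1:ℝ) ≤ (k:ℝ) := by exact_mod_cast hk
    have hcc : (0:ℝ) < (k:ℝ)+1 := by linarith
    set s : ℝ := 1/((k:ℝ)+1) with hsdef
    have hKd : κcvx/((k:ℝ)+1) = κcvx*s := by rw [hsdef]; ring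
    rw [hKd] at hI
    have hsq : (0:ℝ) ≤ κcvx*(α k)^2/2*(a - s*b)^2 := by positivity
    linarith [hs, hcv, hI, hsq]
  -- the telescoped claim
  have claim : ∀ N : ℕ, 1 ≤ N →
      (f (x N) - f xstar) / (α N)^2
        + κcvx/2 * (1 - (1/((N:ℝ)+1))^2) * ‖xstar - v N‖^2
      ≤ κcvx * (N:ℝ)/((N:ℝ)+1) * ‖xstar - v 0‖^2 := by
    intro N hN
    induction N, hN using Nat.le_induction with
    | base =>
      have hk := key 1 le_rfl
      have hb : f (x 1) ≤ f (xtil 1) := le_trans (hbest 1 le_rfl) (min_le_right _ _)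
      rw [hα1] at hk ⊢
      norm_num at hk ⊢
      linarith
    | succ k hk ih =>
      have hkey := key (k+1) (by omega)
      have hb : f (x (k+1)) ≤ f (xtil (k+1)) := le_trans (hbest (k+1) (by omega)) (min_le_right _ _)
      have hA0 : 0 < α (k+1) := hαpos (k+1) (by omega)
      have hB0 : 0 < α k := hαpos k hk
      have hrec := hαrec k hk
      have hA2 : (0:ℝ) < (α (k+1))^2 := by positivity
      have hB2 : (0:ℝ) < (α k)^2 := by positivity
      simp only [Nat.add_sub_cancel] at hkey
      have hc1 : (1:ℝ) ≤ (k:ℝ) := by exact_mod_cast hk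
      have hcast : (((k+1:ℕ)):ℝ) = (k:ℝ) + 1 := by push_cast; ring
      rw [hcast] at hkey ⊢
      set c := (k:ℝ) with hcdef
      set P := f (x (k+1)) - f xstar with hPdef
      set Q := f (x k) - f xstar with hQdef
      set R' := ‖xstar - v (k+1)‖^2 with hR'def
      set Rk := ‖xstar - v k‖^2 with hRkdef
      set R0 := ‖xstar - v 0‖^2 with hR0def
      have hQ0 : 0 ≤ Q := sub_nonneg.2 (hxstar _)
      have hRk0 : (0:ℝ) ≤ Rk := sq_nonneg _
      have hR00 : (0:ℝ) ≤ R0 := sq_nonneg _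
      -- divide key by (α (k+1))^2
      have hdiv : P/(α (k+1))^2 + κcvx/2*(1 - (1/(c+1+1))^2)*R'
          ≤ (1 - α (k+1))/(α (k+1))^2*Q + κcvx/2*Rk := by
        have hraw : P + κcvx*(α (k+1))^2/2*(1 - (1/(c+1+1))^2)*R'
            ≤ (1 - α (k+1))*Q + κcvx*(α (k+1))^2/2*Rk := by
          have : f (xtil (k+1)) - f xstar + κcvx*(α (k+1))^2/2*(1 - (1/(c+1+1))^2)*R'
              ≤ (1 - α (k+1))*Q + κcvx*(α (k+1))^2/2*Rk := hkey
          have hP : P ≤ f (xtil (k+1)) - f xstar := by rw [hPdef]; linarith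
          linarith
        have h1 : (P + κcvx*(α (k+1))^2/2*(1 - (1/(c+1+1))^2)*R')/(α (k+1))^2
            ≤ ((1 - α (k+1))*Q + κcvx*(α (k+1))^2/2*Rk)/(α (k+1))^2 :=
          div_le_div_of_nonneg_right hraw hA2.le
        calc P/(α (k+1))^2 + κcvx/2*(1 - (1/(c+1+1))^2)*R'
            = (P + κcvx*(α (k+1))^2/2*(1 - (1/(c+1+1))^2)*R')/(α (k+1))^2 := by
              field_simp
          _ ≤ ((1 - α (k+1))*Q + κcvx*(α (k+1))^2/2*Rk)/(α (k+1))^2 := h1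
          _ = (1 - α (k+1))/(α (k+1))^2*Q + κcvx/2*Rk := by field_simp
      rw [hrec] at hdiv
      -- hdiv : P/A² + κcvx/2 θ' R' ≤ 1/B² * Q + κcvx/2 Rk
      have hQB : 1/(α k)^2 * Q = Q/(α k)^2 := by ring
      rw [hQB] at hdiv
      -- scalar step using ih
      set u := Q/(α k)^2 with hudef
      have hu0 : 0 ≤ u := div_nonneg hQ0 hB2.le
      set m := κcvx/2*(1 - (1/(c+1))^2)*Rk with hmdef
      have hθ0 : (0:ℝ) ≤ 1 - (1/(c+1))^2 := by
        have h1 : (1/(c+1))^2 ≤ 1 := by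
          rw [div_pow, one_pow, div_le_one (by positivity)]
          nlinarith
        linarith
      have hm0 : 0 ≤ m := by
        apply mul_nonneg (mul_nonneg (by positivity) hθ0) hRk0
      set g := (c+1)^2/(c*(c+2)) with hgdef
      have hg1 : (1:ℝ) ≤ g := by
        rw [hgdef, le_div_iff₀ (by nlinarith)]
        nlinarith
      have hmg : κcvx/2*Rk = m * g := by
        rw [hmdef, hgdef]
        field_simp
        ring
      have hstep : u + κcvx/2*Rk ≤ κcvx*(c+1)/(c+1+1)*R0 := by
        have h1 : u + m*g ≤ (u + m)*g := by nlinarith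
        have h2 : (u + m)*g ≤ (κcvx*c/(c+1)*R0)*g :=
          mul_le_mul_of_nonneg_right ih (by linarith)
        have h3 : (κcvx*c/(c+1)*R0)*g = κcvx*(c+1)/(c+1+1)*R0 := by
          rw [hgdef]
          have hc0 : c ≠ 0 := by linarith
          have hc10 : c+1 ≠ 0 := by linarith
          have hc20 : c+2 ≠ 0 := by linarith
          field_simp
          ring
        rw [hmg]
        linarith
      linarith
  -- part (a)
  have parta : ∀ N : ℕ, 1 ≤ N →
      f (x N) - f xstar ≤ 4 * κcvx / ((N : ℝ) + 1) ^ 2 * ‖xstar - x 0‖ ^ 2 := by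
    intro N hN
    have hcl := claim N hN
    have hA0 : 0 < α N := hαpos N hN
    have hA2 : (0:ℝ) < (α N)^2 := by positivity
    have hN1 : (1:ℝ) ≤ (N:ℝ) := by exact_mod_cast hN
    have hθ0 : (0:ℝ) ≤ 1 - (1/((N:ℝ)+1))^2 := by
      have h1 : (1/((N:ℝ)+1))^2 ≤ 1 := by
        rw [div_pow, one_pow, div_le_one (by positivity)]
        nlinarith
      linarith
    have hR' : (0:ℝ) ≤ κcvx/2 * (1 - (1/((N:ℝ)+1))^2) * ‖xstar - v N‖^2 :=
      mul_nonneg (mul_nonneg (by positivity) hθ0) (sq_nonneg _)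
    have h1 : (f (x N) - f xstar)/(α N)^2 ≤ κcvx * (N:ℝ)/((N:ℝ)+1) * ‖xstar - v 0‖^2 := by
      linarith
    have h2 : f (x N) - f xstar ≤ (α N)^2 * (κcvx * (N:ℝ)/((N:ℝ)+1) * ‖xstar - v 0‖^2) := by
      rw [div_le_iff₀ hA2] at h1
      linarith [h1]
    rw [hv0] at h2
    have hαb := halphab N hN
    have hA2b : (α N)^2 ≤ 4/((N:ℝ)+1)^2 := by
      calc (α N)^2 ≤ (2/((N:ℝ)+1))^2 := pow_le_pow_left₀ hA0.le hαb 2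
        _ = 4/((N:ℝ)+1)^2 := by rw [div_pow]; norm_num
    have hRHS0 : (0:ℝ) ≤ κcvx * (N:ℝ)/((N:ℝ)+1) * ‖xstar - x 0‖^2 := by positivity
    have h3 : f (x N) - f xstar ≤ 4/((N:ℝ)+1)^2 * (κcvx * (N:ℝ)/((N:ℝ)+1) * ‖xstar - x 0‖^2) :=
      le_trans h2 (mul_le_mul_of_nonneg_right hA2b hRHS0)
    have h4 : 4/((N:ℝ)+1)^2 * (κcvx * (N:ℝ)/((N:ℝ)+1) * ‖xstar - x 0‖^2)
        ≤ 4 * κcvx / ((N:ℝ)+1)^2 * ‖xstar - x 0‖^2 := by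
      have hfrac : (N:ℝ)/((N:ℝ)+1) ≤ 1 := by
        rw [div_le_one (by positivity)]; linarith
      have heq : 4/((N:ℝ)+1)^2 * (κcvx * (N:ℝ)/((N:ℝ)+1) * ‖xstar - x 0‖^2)
          = (4 * κcvx / ((N:ℝ)+1)^2 * ‖xstar - x 0‖^2) * ((N:ℝ)/((N:ℝ)+1)) := by
        ring
      have h0 : (0:ℝ) ≤ 4 * κcvx / ((N:ℝ)+1)^2 * ‖xstar - x 0‖^2 := by positivity
      rw [heq]
      exact mul_le_of_le_one_right h0 hfrac
    linarith
  -- per-index gradient bound for part (b)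
  have hwb : ∀ k : ℕ, 1 ≤ k → ∃ w : EuclideanSpace ℝ (Fin p),
      CSubgradAt f w (xbar k) ∧ ‖w‖^2 ≤ 8*κmax*(f (x (k-1)) - f (x k)) := by
    intro k hk
    obtain ⟨⟨w, hws, hwn⟩, hdesc⟩ := hprox k hk
    have hκ := hκpos k hk
    refine ⟨w - κ k • (xbar k - x (k-1)), csubgrad_of_quad hf hκ.le hws, ?_⟩
    set t := ‖xbar k - x (k-1)‖ with htdef
    have ht0 : 0 ≤ t := norm_nonneg _
    have hn : ‖w - κ k • (xbar k - x (k-1))‖ ≤ 2*(κ k)*t := by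
      refine le_trans (norm_sub_le _ _) ?_
      rw [norm_smul, Real.norm_eq_abs, abs_of_pos hκ]
      linarith [hwn]
    have hΔ : κ k/2*t^2 ≤ f (x (k-1)) - f (xbar k) := by linarith [hdesc]
    have hxk : f (x k) ≤ f (xbar k) := le_trans (hbest k hk) (min_le_left _ _)
    have hΔ0 : (0:ℝ) ≤ f (x (k-1)) - f (xbar k) := by nlinarith [hΔ, sq_nonneg t, hκ]
    have hκm := hκmax k hk
    have hκm0 : 0 < κmax := lt_of_lt_of_le hκ hκm
    have hw0 : 0 ≤ ‖w - κ k • (xbar k - x (k-1))‖ := norm_nonneg _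
    have h1 : ‖w - κ k • (xbar k - x (k-1))‖^2 ≤ 4*(κ k)^2*t^2 := by nlinarith [hn, hw0, hκ, ht0]
    nlinarith [h1, hΔ, hκ, hκm, hΔ0, hxk, hκm0, mul_le_mul_of_nonneg_left hΔ (by positivity : (0:ℝ) ≤ 8*κ k)]
  -- main conclusion
  intro N hN
  refine ⟨parta N hN, ?_⟩
  have htel : ∑ i ∈ Finset.range N, (f (x (N+i)) - f (x (N+i+1))) = f (x N) - f (x (2*N)) := by
    have h1 := Finset.sum_range_sub' (fun i => f (x (N+i))) N
    simpa [two_mul, add_assoc] using h1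
  have hNR : (0:ℝ) < (N:ℝ) := by exact_mod_cast hN
  have havg : ∃ i ∈ Finset.range N,
      f (x (N+i)) - f (x (N+i+1)) ≤ (f (x N) - f (x (2*N)))/(N:ℝ) := by
    apply Finset.exists_le_of_sum_le ⟨0, Finset.mem_range.2 (by omega)⟩
    rw [htel, Finset.sum_const, Finset.card_range, nsmul_eq_mul,
      mul_div_cancel₀ _ (ne_of_gt hNR)]
  obtain ⟨i, hi, hile⟩ := havg
  have hiN : i < N := Finset.mem_range.1 hi
  refine ⟨N+i+1, by omega, by omega, ?_⟩
  obtain ⟨w, hwsub, hwle⟩ := hwb (N+i+1) (by omega)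
  refine ⟨w, hwsub, ?_⟩
  have e : (N+i+1) - 1 = N+i := by omega
  rw [e] at hwle
  have hpa := parta N hN
  have hstar2 : f xstar ≤ f (x (2*N)) := hxstar _
  have hκm0 : (0:ℝ) < κmax := lt_of_lt_of_le (hκpos 1 le_rfl) (hκmax 1 le_rfl)
  have hfinal : 8*κmax*((f (x N) - f (x (2*N)))/(N:ℝ))
      ≤ 32*κmax*κcvx/((N:ℝ)*((N:ℝ)+1)^2)*‖xstar - x 0‖^2 := by
    have h1 : f (x N) - f (x (2*N)) ≤ 4*κcvx/((N:ℝ)+1)^2*‖xstar - x 0‖^2 := by linarith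
    have h2 : (f (x N) - f (x (2*N)))/(N:ℝ)
        ≤ (4*κcvx/((N:ℝ)+1)^2*‖xstar - x 0‖^2)/(N:ℝ) :=
      div_le_div_of_nonneg_right h1 hNR.le
    calc 8*κmax*((f (x N) - f (x (2*N)))/(N:ℝ))
        ≤ 8*κmax*((4*κcvx/((N:ℝ)+1)^2*‖xstar - x 0‖^2)/(N:ℝ)) :=
          mul_le_mul_of_nonneg_left h2 (by linarith)
      _ = 32*κmax*κcvx/((N:ℝ)*((N:ℝ)+1)^2)*‖xstar - x 0‖^2 := by
          field_simp
          ring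
  calc ‖w‖^2 ≤ 8*κmax*(f (x (N+i)) - f (x (N+i+1))) := hwle
    _ ≤ 8*κmax*((f (x N) - f (x (2*N)))/(N:ℝ)) :=
        mul_le_mul_of_nonneg_left hile (by linarith)
    _ ≤ _ := hfinal
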